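/- Let π be a monotone linkage function on a finite set X and suppose S is an inclusion-minimal maximizer of M(T) = min_{y ∉ T} π(y, T) over nonempty proper subsets of X. Then for any π-series (x₁,…,x_N) starting with some x₁ ∈ S, if x_{k+1} is the first element of the series not in S, then S = {x₁,…,x_k}. -/

import Mathlib

/-! The prefix `P = {x₁, …, x_k}` lies in `S`, and the greedy choice of `x_{k+1}` gives
`M(P) = π(x_{k+1}, P) ≥ π(x_{k+1}, S) ≥ M(S)` by monotonicity, so `P` is itself a maximizer;
minimality of `S` then forces `P = S`. -/

/-- The prefix `{x₁, …, x_k}` of an enumeration `x` of a finite set. -/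
def prefixSet {X : Type*} [DecidableEq X] {N : ℕ} (x : Fin N ≃ X) (k : ℕ) : Finset X :=
  (Finset.univ.filter fun i : Fin N => (i : ℕ) < k).image x

/-- `M(T) = min_{y ∉ T} π(y, T)` (as an infimum, attained when `X \ T` is finite nonempty). -/
noncomputable def Mfun {X : Type*} (π : X → Finset X → ℝ) (T : Finset X) : ℝ :=
  sInf ((fun y => π y T) '' {y : X | y ∉ T})

def IsMaximizerM {X : Type*} [Fintype X] (π : X → Finset X → ℝ) (S : Finset X) : Prop :=
  S.Nonempty ∧ S ≠ Finset.univ ∧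
    ∀ T : Finset X, T.Nonempty → T ≠ Finset.univ → Mfun π T ≤ Mfun π S

def IsMinimalMaximizerM {X : Type*} [Fintype X] (π : X → Finset X → ℝ) (S : Finset X) : Prop :=
  IsMaximizerM π S ∧ ∀ T : Finset X, T ⊂ S → ¬ IsMaximizerM π T

theorem apply_mem_prefixSet_iff {X : Type*} [DecidableEq X] {N : ℕ} (x : Fin N ≃ X)
    (k : ℕ) (i : Fin N) : x i ∈ prefixSet x k ↔ (i : ℕ) < k := by
  simp [prefixSet]

section Linkage

variable {X : Type*} (π : X → Finset X → ℝ) {T : Finset X} {y : X}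

theorem Mfun_le_of_notMem [Finite X] (hy : y ∉ T) : Mfun π T ≤ π y T :=
  csInf_le (Set.toFinite _).bddBelow ⟨y, hy, rfl⟩

theorem Mfun_eq_of_forall_le (hy : y ∉ T) (hmin : ∀ z ∉ T, π y T ≤ π z T) :
    Mfun π T = π y T :=
  IsLeast.csInf_eq ⟨⟨y, hy, rfl⟩, by rintro _ ⟨z, hz, rfl⟩; exact hmin z hz⟩

variable [Fintype X] {S : Finset X}

theorem IsMaximizerM.of_subset_of_Mfun_eq
    (hmono : ∀ (x : X) (S T : Finset X), S ⊆ T → x ∉ T → π x T ≤ π x S)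
    (hS : IsMaximizerM π S) (hTS : T ⊆ S) (hT : T.Nonempty) (hy : y ∉ S)
    (hMT : Mfun π T = π y T) : IsMaximizerM π T := by
  have hST : Mfun π S ≤ Mfun π T :=
    calc Mfun π S ≤ π y S := Mfun_le_of_notMem π hy
      _ ≤ π y T := hmono y T S hTS hy
      _ = Mfun π T := hMT.symm
  refine ⟨hT, fun hTu => hy (hTS (hTu ▸ Finset.mem_univ y)), fun U hU hUu => ?_⟩
  exact (hS.2.2 U hU hUu).trans hST

theorem IsMinimalMaximizerM.eq_of_subset (hS : IsMinimalMaximizerM π S) (hTS : T ⊆ S)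
    (hT : IsMaximizerM π T) : T = S := by
  by_contra hne
  exact hS.2 T (hTS.ssubset_of_ne hne) hT

end Linkage

theorem stmt8_general {X : Type*} [Fintype X] [DecidableEq X]
    (π : X → Finset X → ℝ)
    (hmono : ∀ (x : X) (S T : Finset X), S ⊆ T → x ∉ T → π x T ≤ π x S)
    (N : ℕ) (x : Fin N ≃ X)
    (hser : ∀ (k : ℕ) (hk : k < N), ∀ y : X, y ∉ prefixSet x k →
      π (x ⟨k, hk⟩) (prefixSet x k) ≤ π y (prefixSet x k))
    (S : Finset X) (hminmax : IsMinimalMaximizerM π S)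
    (k : ℕ) (hk : k < N) (hk1 : 1 ≤ k)
    (hpre : ∀ i : Fin N, (i : ℕ) < k → x i ∈ S)
    (hout : x ⟨k, hk⟩ ∉ S) :
    S = prefixSet x k := by
  have hPS : prefixSet x k ⊆ S := by
    intro a ha
    rw [← x.apply_symm_apply a, apply_mem_prefixSet_iff] at ha
    simpa using hpre _ ha
  have hPne : (prefixSet x k).Nonempty :=
    ⟨x ⟨0, by omega⟩, (apply_mem_prefixSet_iff x k _).2 hk1⟩
  have hMP : Mfun π (prefixSet x k) = π (x ⟨k, hk⟩) (prefixSet x k) :=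
    Mfun_eq_of_forall_le π (fun h => hout (hPS h)) (hser k hk)
  exact (hminmax.eq_of_subset π hPS
    (hminmax.1.of_subset_of_Mfun_eq π hmono hPS hPne hout hMP)).symm

theorem stmt8 {X : Type*} [Fintype X] [DecidableEq X]
    (π : X → Finset X → ℝ)
    (hmono : ∀ (x : X) (S T : Finset X), S ⊆ T → x ∉ T → π x T ≤ π x S)
    (N : ℕ) (hN : N = Fintype.card X) (x : Fin N ≃ X)
    (hser : ∀ (k : ℕ) (hk : k < N), ∀ y : X, y ∉ prefixSet x k →
      π (x ⟨k, hk⟩) (prefixSet x k) ≤ π y (prefixSet x k))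
    (S : Finset X) (hminmax : IsMinimalMaximizerM π S)
    (hN0 : 0 < N) (hx1 : x ⟨0, hN0⟩ ∈ S)
    (k : ℕ) (hk : k < N) (hk1 : 1 ≤ k)
    (hpre : ∀ i : Fin N, (i : ℕ) < k → x i ∈ S)
    (hout : x ⟨k, hk⟩ ∉ S) :
    S = prefixSet x k :=
  stmt8_general π hmono N x hser S hminmax k hk hk1 hpre hout
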